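/- Let (A,B,X,ρ,u,σ,v,λ,H^0) be a twisted covariant system in which X is an A–B equivalence bimodule. Then the crossed product X⋊_λ H is an (A⋊_{ρ,u}H)–(B⋊_{σ,v}H) equivalence bimodule; in particular the associativity condition _{A⋊_{ρ,u}H}⟨x⋊h, y⋊l⟩(z⋊m) = (x⋊h)⟨y⋊l, z⋊m⟩_{B⋊_{σ,v}H} holds for all x,y,z ∈ X and h,l,m ∈ H. -/

import Mathlib

open scoped TensorProduct
open Filter Topology
set_option maxHeartbeats 1000000
set_option linter.unusedSectionVars false
set_option synthInstance.maxHeartbeats 400000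
noncomputable section
namespace SMEPaper
universe u

/-! ### Generalities on tensor products with a finite dimensional C*-algebra -/

/-- Contraction of the right tensor factor against a linear functional:
`appRight f (m ⊗ c) = f c • m`. -/
def appRight {M C : Type*} [AddCommGroup M] [Module ℂ M] [AddCommGroup C] [Module ℂ C]
    (f : C →ₗ[ℂ] ℂ) : M ⊗[ℂ] C →ₗ[ℂ] M :=
  (TensorProduct.rid ℂ M).toLinearMap ∘ₗ TensorProduct.map LinearMap.id f

/-- The `i`-th coordinate, with respect to the canonical finite basis of `C`, of an
element of `M ⊗[ℂ] C`. -/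
def tcoord {M C : Type*} [AddCommGroup M] [Module ℂ M] [AddCommGroup C] [Module ℂ C]
    [FiniteDimensional ℂ C] (i : Fin (Module.finrank ℂ C)) : M ⊗[ℂ] C →ₗ[ℂ] M :=
  appRight ((Module.finBasis ℂ C).coord i)

/-- The star operation on `M ⊗[ℂ] C` (`C` finite dimensional) where the star operation on the
first factor is supplied as a function: on simple tensors, `m ⊗ c ↦ sM m ⊗ star c`. -/
def tstarWith {M C : Type*} [AddCommGroup M] [Module ℂ M] [Ring C] [Algebra ℂ C]
    [StarRing C] [FiniteDimensional ℂ C] (sM : M → M) (t : M ⊗[ℂ] C) : M ⊗[ℂ] C :=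
  ∑ i, sM (tcoord i t) ⊗ₜ star (Module.finBasis ℂ C i)

/-- Combination of an operation on the first factors and an operation on the second (finite
dimensional) factors to an operation on tensor products: on simple tensors,
`tmix op cop (p ⊗ c) (q ⊗ d) = op p q ⊗ cop c d`. -/
def tmix {P Q R C : Type*} [AddCommGroup P] [Module ℂ P] [AddCommGroup Q] [Module ℂ Q]
    [AddCommGroup R] [Module ℂ R] [Ring C] [Algebra ℂ C] [FiniteDimensional ℂ C]
    (op : P → Q → R) (cop : C → C → C) (s : P ⊗[ℂ] C) (t : Q ⊗[ℂ] C) : R ⊗[ℂ] C :=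
  ∑ i, ∑ j,
    op (tcoord i s) (tcoord j t) ⊗ₜ cop (Module.finBasis ℂ C i) (Module.finBasis ℂ C j)

/-- The operation on tensor products induced by an operation on the first factors (and
multiplication in the second): `tact op (p ⊗ c) (q ⊗ d) = op p q ⊗ (c * d)`. -/
def tact {P Q R C : Type*} [AddCommGroup P] [Module ℂ P] [AddCommGroup Q] [Module ℂ Q]
    [AddCommGroup R] [Module ℂ R] [Ring C] [Algebra ℂ C] [FiniteDimensional ℂ C]
    (op : P → Q → R) : P ⊗[ℂ] C → Q ⊗[ℂ] C → R ⊗[ℂ] C :=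
  tmix op (· * ·)

/-- The left inner product on `X ⊗ C` induced by a left (`A`-valued) inner product on `X`:
`(x ⊗ c), (y ⊗ d) ↦ inn x y ⊗ (c * star d)`. -/
def tinnL {X A C : Type*} [AddCommGroup X] [Module ℂ X] [AddCommGroup A] [Module ℂ A]
    [Ring C] [Algebra ℂ C] [StarRing C] [FiniteDimensional ℂ C]
    (inn : X → X → A) : X ⊗[ℂ] C → X ⊗[ℂ] C → A ⊗[ℂ] C :=
  tmix inn (fun c d => c * star d)

/-- The right inner product on `X ⊗ C` induced by a right (`B`-valued) inner product on `X`: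
`(x ⊗ c), (y ⊗ d) ↦ inn x y ⊗ (star c * d)`. -/
def tinnR {X B C : Type*} [AddCommGroup X] [Module ℂ X] [AddCommGroup B] [Module ℂ B]
    [Ring C] [Algebra ℂ C] [StarRing C] [FiniteDimensional ℂ C]
    (inn : X → X → B) : X ⊗[ℂ] C → X ⊗[ℂ] C → B ⊗[ℂ] C :=
  tmix inn (fun c d => star c * d)

/-! ### Finite dimensional C*-Hopf algebras -/

/-- The data and axioms of a finite dimensional C*-Hopf algebra structure on the finite
dimensional C*-algebra `H0`: a comultiplication, counit and antipode satisfying the Hopf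
algebra axioms, compatibly with the ⋆-structure. -/
structure HopfAlgData (H0 : Type u) [Ring H0] [Algebra ℂ H0] [StarRing H0]
    [StarModule ℂ H0] [FiniteDimensional ℂ H0] where
  comul : H0 →ₐ[ℂ] H0 ⊗[ℂ] H0
  counit : H0 →ₐ[ℂ] ℂ
  antipode : H0 →ₗ[ℂ] H0
  coassoc : ∀ h, TensorProduct.map comul.toLinearMap LinearMap.id (comul h)
      = (TensorProduct.assoc ℂ H0 H0 H0).symm
          (TensorProduct.map LinearMap.id comul.toLinearMap (comul h))
  counit_left : ∀ h,
      (TensorProduct.lid ℂ H0) (TensorProduct.map counit.toLinearMap LinearMap.id (comul h)) = h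
  counit_right : ∀ h, appRight counit.toLinearMap (comul h) = h
  antipode_left : ∀ (h : H0) (n : ℕ) (h1 h2 : Fin n → H0),
      comul h = ∑ i, h1 i ⊗ₜ h2 i → ∑ i, antipode (h1 i) * h2 i = counit h • 1
  antipode_right : ∀ (h : H0) (n : ℕ) (h1 h2 : Fin n → H0),
      comul h = ∑ i, h1 i ⊗ₜ h2 i → ∑ i, h1 i * antipode (h2 i) = counit h • 1
  comul_star : ∀ h, comul (star h) = tstarWith star (comul h)
  counit_star : ∀ h, counit (star h) = starRingEnd ℂ (counit h)

/-! ### Coactions on C*-algebras -/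

section Coaction
variable {H0 : Type u} [Ring H0] [Algebra ℂ H0] [StarRing H0] [StarModule ℂ H0]
  [FiniteDimensional ℂ H0]
variable {A B X : Type u} [Ring A] [Algebra ℂ A] [StarRing A]
  [Ring B] [Algebra ℂ B] [StarRing B] [AddCommGroup X] [Module ℂ X]

/-- `ρ : A → A ⊗ H0` is a weak coaction of `H0` (with counit `ε0`) on `A`:
a unital ⋆-homomorphism with `(id ⊗ ε0) ∘ ρ = id`. -/
structure IsWeakCoaction (ε0 : H0 →ₗ[ℂ] ℂ) (ρ : A →ₗ[ℂ] A ⊗[ℂ] H0) : Prop where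
  map_one : ρ 1 = 1
  map_mul : ∀ a b, ρ (a * b) = ρ a * ρ b
  map_star : ∀ a, ρ (star a) = tstarWith star (ρ a)
  counital : ∀ a, appRight ε0 (ρ a) = a

/-- `ρ : A → A ⊗ H0` is a coaction of `H0` (with comultiplication `Δ0`, counit `ε0`) on `A`:
a weak coaction with `(ρ ⊗ id) ∘ ρ = (id ⊗ Δ0) ∘ ρ`. -/
structure IsCoaction (Δ0 : H0 →ₗ[ℂ] H0 ⊗[ℂ] H0) (ε0 : H0 →ₗ[ℂ] ℂ)
    (ρ : A →ₗ[ℂ] A ⊗[ℂ] H0) extends IsWeakCoaction ε0 ρ : Prop where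
  coassoc : ∀ a, TensorProduct.map ρ LinearMap.id (ρ a)
      = (TensorProduct.assoc ℂ A H0 H0).symm (TensorProduct.map LinearMap.id Δ0 (ρ a))

/-- The pair `(ρ, u)` is a twisted coaction of `H0` on `A`. -/
structure IsTwistedCoaction (Δ0 : H0 →ₗ[ℂ] H0 ⊗[ℂ] H0) (ε0 : H0 →ₗ[ℂ] ℂ)
    (ρ : A →ₗ[ℂ] A ⊗[ℂ] H0) (u : (A ⊗[ℂ] H0) ⊗[ℂ] H0)
    extends IsWeakCoaction ε0 ρ : Prop where
  unitary_left : u * tstarWith (tstarWith star) u = 1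
  unitary_right : tstarWith (tstarWith star) u * u = 1
  twisted_coassoc : ∀ a, TensorProduct.map ρ LinearMap.id (ρ a)
      = u * ((TensorProduct.assoc ℂ A H0 H0).symm (TensorProduct.map LinearMap.id Δ0 (ρ a)))
        * tstarWith (tstarWith star) u
  cocycle : (u ⊗ₜ (1 : H0))
        * TensorProduct.map ((TensorProduct.assoc ℂ A H0 H0).symm.toLinearMap
            ∘ₗ TensorProduct.map LinearMap.id Δ0) LinearMap.id u
      = TensorProduct.map (TensorProduct.map ρ LinearMap.id) LinearMap.id u
        * (TensorProduct.assoc ℂ (A ⊗[ℂ] H0) H0 H0).symm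
            (TensorProduct.map LinearMap.id Δ0 u)
  counit_mid : ∀ h : Module.Dual ℂ H0, appRight h (appRight ε0 u) = h 1 • (1 : A)
  counit_out : ∀ h : Module.Dual ℂ H0, appRight ε0 (appRight h u) = h 1 • (1 : A)

/-- The trivial coaction `a ↦ a ⊗ 1` of `H0` on `A`. -/
def trivialCoaction (H0 : Type u) [Ring H0] [Algebra ℂ H0] (A : Type u) [Ring A]
    [Algebra ℂ A] : A →ₗ[ℂ] A ⊗[ℂ] H0 :=
  (TensorProduct.mk ℂ A H0).flip 1

end Coaction

/-! ### Hilbert bimodules -/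

/-- A (pre-)Hilbert `A`–`B` bimodule structure on `X`: a bimodule with a left `A`-valued and a
right `B`-valued inner product, compatible with the module actions, with the appropriate
(conjugate-)linearity, symmetry, positivity and definiteness properties. -/
structure Bimod (A B X : Type u) [Ring A] [Algebra ℂ A] [StarRing A]
    [Ring B] [Algebra ℂ B] [StarRing B] [AddCommGroup X] [Module ℂ X] where
  ls : A → X → X
  rs : X → B → X
  linn : X → X → A
  rinn : X → X → B
  ls_one : ∀ x, ls 1 x = x
  ls_mul : ∀ a a' x, ls (a * a') x = ls a (ls a' x)
  ls_add : ∀ a a' x, ls (a + a') x = ls a x + ls a' x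
  ls_add' : ∀ a x y, ls a (x + y) = ls a x + ls a y
  ls_smul : ∀ (c : ℂ) a x, ls (c • a) x = c • ls a x
  ls_smul' : ∀ (c : ℂ) a x, ls a (c • x) = c • ls a x
  rs_one : ∀ x, rs x 1 = x
  rs_mul : ∀ x b b', rs x (b * b') = rs (rs x b) b'
  rs_add : ∀ x b b', rs x (b + b') = rs x b + rs x b'
  rs_add' : ∀ x y b, rs (x + y) b = rs x b + rs y b
  rs_smul : ∀ (c : ℂ) x b, rs x (c • b) = c • rs x b
  rs_smul' : ∀ (c : ℂ) x b, rs (c • x) b = c • rs x b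
  ls_rs : ∀ a x b, ls a (rs x b) = rs (ls a x) b
  linn_add_left : ∀ x y z, linn (x + y) z = linn x z + linn y z
  linn_add_right : ∀ x y z, linn x (y + z) = linn x y + linn x z
  rinn_add_left : ∀ x y z, rinn (x + y) z = rinn x z + rinn y z
  rinn_add_right : ∀ x y z, rinn x (y + z) = rinn x y + rinn x z
  linn_smul_left : ∀ (c : ℂ) x y, linn (c • x) y = c • linn x y
  linn_smul_right : ∀ (c : ℂ) x y, linn x (c • y) = starRingEnd ℂ c • linn x y
  rinn_smul_left : ∀ (c : ℂ) x y, rinn (c • x) y = starRingEnd ℂ c • rinn x y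
  rinn_smul_right : ∀ (c : ℂ) x y, rinn x (c • y) = c • rinn x y
  linn_star : ∀ x y, star (linn x y) = linn y x
  rinn_star : ∀ x y, star (rinn x y) = rinn y x
  linn_ls : ∀ a x y, linn (ls a x) y = a * linn x y
  rinn_rs : ∀ x y b, rinn x (rs y b) = rinn x y * b
  linn_rs : ∀ x y b, linn (rs x b) y = linn x (rs y (star b))
  rinn_ls : ∀ a x y, rinn (ls a x) y = rinn x (ls (star a) y)
  linn_pos : ∀ x, ∃ a, linn x x = star a * a
  rinn_pos : ∀ x, ∃ b, rinn x x = star b * b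
  rinn_def : ∀ x, rinn x x = 0 → x = 0

section BimodDefs
variable {A B X : Type u} [Ring A] [Algebra ℂ A] [StarRing A]
    [Ring B] [Algebra ℂ B] [StarRing B] [AddCommGroup X] [Module ℂ X]

/-- A Hilbert bimodule is of finite type if it admits a finite right basis and a finite left
basis in the sense of Kajiwara–Watatani. -/
def Bimod.FiniteType (bm : Bimod A B X) : Prop :=
  (∃ (n : ℕ) (u : Fin n → X), ∀ x, ∑ i, bm.rs (u i) (bm.rinn (u i) x) = x) ∧
  (∃ (m : ℕ) (v : Fin m → X), ∀ x, ∑ j, bm.ls (bm.linn x (v j)) (v j) = x)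

/-- An equivalence bimodule: both inner products are full and the associativity condition
`_A⟨x,y⟩ • z = x • ⟨y,z⟩_B` holds. -/
def Bimod.IsEquivalence (bm : Bimod A B X) : Prop :=
  (∀ x y z, bm.ls (bm.linn x y) z = bm.rs x (bm.rinn y z)) ∧
  Submodule.span ℂ (Set.range fun p : X × X => bm.linn p.1 p.2) = ⊤ ∧
  Submodule.span ℂ (Set.range fun p : X × X => bm.rinn p.1 p.2) = ⊤

end BimodDefs

/-! ### Coactions on Hilbert bimodules, covariant systems, strong Morita equivalence -/

section BimodCoaction
variable {H0 : Type u} [Ring H0] [Algebra ℂ H0] [StarRing H0] [StarModule ℂ H0]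
  [FiniteDimensional ℂ H0]
variable {A B X : Type u} [Ring A] [Algebra ℂ A] [StarRing A]
  [Ring B] [Algebra ℂ B] [StarRing B] [AddCommGroup X] [Module ℂ X]

/-- `(A, B, X, ρ, σ, λ, H0)` is a weak covariant system: `lam` is a weak coaction of `H0` on
the Hilbert `A`–`B` bimodule `X` with respect to `(A, B, ρ, σ)`. -/
structure IsWeakCoactionBimod (ε0 : H0 →ₗ[ℂ] ℂ) (bm : Bimod A B X)
    (ρ : A →ₗ[ℂ] A ⊗[ℂ] H0) (σ : B →ₗ[ℂ] B ⊗[ℂ] H0)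
    (lam : X →ₗ[ℂ] X ⊗[ℂ] H0) : Prop where
  ls_compat : ∀ a x, lam (bm.ls a x) = tact bm.ls (ρ a) (lam x)
  rs_compat : ∀ x b, lam (bm.rs x b) = tact bm.rs (lam x) (σ b)
  linn_compat : ∀ x y, ρ (bm.linn x y) = tinnL bm.linn (lam x) (lam y)
  rinn_compat : ∀ x y, σ (bm.rinn x y) = tinnR bm.rinn (lam x) (lam y)
  counital : ∀ x, appRight ε0 (lam x) = x

/-- `(A, B, X, ρ, σ, λ, H0)` is a covariant system: `lam` is a coaction of `H0` on the
Hilbert `A`–`B` bimodule `X` with respect to `(A, B, ρ, σ)`. -/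
structure IsCoactionBimod (Δ0 : H0 →ₗ[ℂ] H0 ⊗[ℂ] H0) (ε0 : H0 →ₗ[ℂ] ℂ) (bm : Bimod A B X)
    (ρ : A →ₗ[ℂ] A ⊗[ℂ] H0) (σ : B →ₗ[ℂ] B ⊗[ℂ] H0) (lam : X →ₗ[ℂ] X ⊗[ℂ] H0)
    extends IsWeakCoactionBimod ε0 bm ρ σ lam : Prop where
  coassoc : ∀ x, TensorProduct.map lam LinearMap.id (lam x)
      = (TensorProduct.assoc ℂ X H0 H0).symm (TensorProduct.map LinearMap.id Δ0 (lam x))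

/-- `(A, B, X, ρ, u, σ, v, λ, H0)` is a twisted covariant system: `lam` is a twisted coaction
of `H0` on the Hilbert `A`–`B` bimodule `X` with respect to `(A, B, ρ, u, σ, v)`. -/
structure IsTwistedCoactionBimod (Δ0 : H0 →ₗ[ℂ] H0 ⊗[ℂ] H0) (ε0 : H0 →ₗ[ℂ] ℂ)
    (bm : Bimod A B X) (ρ : A →ₗ[ℂ] A ⊗[ℂ] H0) (u : (A ⊗[ℂ] H0) ⊗[ℂ] H0)
    (σ : B →ₗ[ℂ] B ⊗[ℂ] H0) (v : (B ⊗[ℂ] H0) ⊗[ℂ] H0) (lam : X →ₗ[ℂ] X ⊗[ℂ] H0)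
    extends IsWeakCoactionBimod ε0 bm ρ σ lam : Prop where
  twisted : ∀ x, TensorProduct.map lam LinearMap.id (lam x)
      = tact (tact bm.rs)
          (tact (tact bm.ls) u
            ((TensorProduct.assoc ℂ X H0 H0).symm (TensorProduct.map LinearMap.id Δ0 (lam x))))
          (tstarWith (tstarWith star) v)

/-- Two weak coactions `ρ` (on `A`) and `σ` (on `B`) of `H0` are strongly Morita equivalent
if there are an `A`–`B` equivalence bimodule `X` and a weak coaction of `H0` on `X` with
respect to `(A, B, ρ, σ)`. -/
def WeakSME (ε0 : H0 →ₗ[ℂ] ℂ) (ρ : A →ₗ[ℂ] A ⊗[ℂ] H0) (σ : B →ₗ[ℂ] B ⊗[ℂ] H0) : Prop :=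
  ∃ (X : Type u) (_ : AddCommGroup X) (_ : Module ℂ X) (bm : Bimod A B X),
    bm.IsEquivalence ∧ ∃ lam : X →ₗ[ℂ] X ⊗[ℂ] H0, IsWeakCoactionBimod ε0 bm ρ σ lam

/-- Two coactions `ρ` (on `A`) and `σ` (on `B`) of `H0` are strongly Morita equivalent if
there are an `A`–`B` equivalence bimodule `X` and a coaction of `H0` on `X` with respect to
`(A, B, ρ, σ)`. -/
def CoactSME (Δ0 : H0 →ₗ[ℂ] H0 ⊗[ℂ] H0) (ε0 : H0 →ₗ[ℂ] ℂ)
    (ρ : A →ₗ[ℂ] A ⊗[ℂ] H0) (σ : B →ₗ[ℂ] B ⊗[ℂ] H0) : Prop :=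
  ∃ (X : Type u) (_ : AddCommGroup X) (_ : Module ℂ X) (bm : Bimod A B X),
    bm.IsEquivalence ∧ ∃ lam : X →ₗ[ℂ] X ⊗[ℂ] H0, IsCoactionBimod Δ0 ε0 bm ρ σ lam

/-- Two twisted coactions `(ρ, u)` (on `A`) and `(σ, v)` (on `B`) of `H0` are strongly Morita
equivalent if there are an `A`–`B` equivalence bimodule `X` and a twisted coaction of `H0` on
`X` with respect to `(A, B, ρ, u, σ, v)`. -/
def TwistedSME (Δ0 : H0 →ₗ[ℂ] H0 ⊗[ℂ] H0) (ε0 : H0 →ₗ[ℂ] ℂ)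
    (ρ : A →ₗ[ℂ] A ⊗[ℂ] H0) (u : (A ⊗[ℂ] H0) ⊗[ℂ] H0)
    (σ : B →ₗ[ℂ] B ⊗[ℂ] H0) (v : (B ⊗[ℂ] H0) ⊗[ℂ] H0) : Prop :=
  ∃ (X : Type u) (_ : AddCommGroup X) (_ : Module ℂ X) (bm : Bimod A B X),
    bm.IsEquivalence ∧
      ∃ lam : X →ₗ[ℂ] X ⊗[ℂ] H0, IsTwistedCoactionBimod Δ0 ε0 bm ρ u σ v lam

end BimodCoaction
/-! ### A finite dimensional C*-Hopf algebra together with its dual -/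

/-- A finite dimensional C*-Hopf algebra `H` together with its dual C*-Hopf algebra `H0`:
Hopf algebra structures on both, a perfect pairing compatible with all the structure, and
the distinguished (Haar) projections `e ∈ H` and `τ ∈ H0`. -/
structure HopfPairData (H H0 : Type u) [Ring H] [Algebra ℂ H] [StarRing H] [StarModule ℂ H]
    [FiniteDimensional ℂ H] [Ring H0] [Algebra ℂ H0] [StarRing H0] [StarModule ℂ H0]
    [FiniteDimensional ℂ H0] where
  dH : HopfAlgData H
  dH0 : HopfAlgData H0
  pair : H →ₗ[ℂ] H0 →ₗ[ℂ] ℂ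
  perfect : Function.Bijective fun h => pair h
  perfect' : Function.Bijective fun φ => pair.flip φ
  pair_mul_left : ∀ (h l : H) (φ : H0) (n : ℕ) (φ1 φ2 : Fin n → H0),
      dH0.comul φ = ∑ i, φ1 i ⊗ₜ φ2 i →
      pair (h * l) φ = ∑ i, pair h (φ1 i) * pair l (φ2 i)
  pair_mul_right : ∀ (h : H) (φ ψ : H0) (n : ℕ) (h1 h2 : Fin n → H),
      dH.comul h = ∑ i, h1 i ⊗ₜ h2 i →
      pair h (φ * ψ) = ∑ i, pair (h1 i) φ * pair (h2 i) ψ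
  pair_one_left : ∀ φ, pair 1 φ = dH0.counit φ
  pair_one_right : ∀ h, pair h 1 = dH.counit h
  pair_antipode : ∀ h φ, pair (dH.antipode h) φ = pair h (dH0.antipode φ)
  pair_star : ∀ h φ, pair (star h) φ = starRingEnd ℂ (pair h (star (dH0.antipode φ)))
  pair_star' : ∀ h φ, pair h (star φ) = starRingEnd ℂ (pair (star (dH.antipode h)) φ)
  haar : H
  haar_star : star haar = haar
  haar_idem : haar * haar = haar
  haar_absorb : ∀ h, h * haar = dH.counit h • haar
  haar_absorb' : ∀ h, haar * h = dH.counit h • haar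
  counit_haar : dH.counit haar = 1
  haar0 : H0
  haar0_star : star haar0 = haar0
  haar0_idem : haar0 * haar0 = haar0
  haar0_absorb : ∀ φ, φ * haar0 = dH0.counit φ • haar0
  haar0_absorb' : ∀ φ, haar0 * φ = dH0.counit φ • haar0
  counit_haar0 : dH0.counit haar0 = 1

section DualAct
variable {H H0 : Type u} [Ring H] [Algebra ℂ H] [StarRing H] [StarModule ℂ H]
    [FiniteDimensional ℂ H] [Ring H0] [Algebra ℂ H0] [StarRing H0] [StarModule ℂ H0]
    [FiniteDimensional ℂ H0]

/-- The action of `h ∈ H` on `M` induced by a coaction-type map `ρ : M → M ⊗ H0` of the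
dual `H0`:  `h ·_ρ m = (id ⊗ h)(ρ m)`. -/
def coactAct {M : Type u} [AddCommGroup M] [Module ℂ M] (dp : HopfPairData H H0)
    (ρ : M →ₗ[ℂ] M ⊗[ℂ] H0) (h : H) (m : M) : M :=
  appRight (dp.pair h) (ρ m)

end DualAct

/-! ### Abstract unital C*-algebra structures on a complex vector space -/

/-- The structure of a unital C*-algebra on a complex vector space `E`, given by raw data:
a bilinear multiplication, a unit, an involution and a C*-norm. (This is used to present
crossed products, whose underlying vector space is a tensor product.) -/
structure RawCStarAlg (E : Type u) [AddCommGroup E] [Module ℂ E] where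
  mul : E →ₗ[ℂ] E →ₗ[ℂ] E
  one : E
  star' : E → E
  cnorm : E → ℝ
  mul_assoc' : ∀ s t r, mul (mul s t) r = mul s (mul t r)
  one_mul' : ∀ s, mul one s = s
  mul_one' : ∀ s, mul s one = s
  star_add' : ∀ s t, star' (s + t) = star' s + star' t
  star_smul' : ∀ (c : ℂ) s, star' (c • s) = starRingEnd ℂ c • star' s
  star_invol : ∀ s, star' (star' s) = s
  star_mul'' : ∀ s t, star' (mul s t) = mul (star' t) (star' s)
  norm_nonneg' : ∀ s, 0 ≤ cnorm s
  norm_def : ∀ s, cnorm s = 0 → s = 0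
  norm_add' : ∀ s t, cnorm (s + t) ≤ cnorm s + cnorm t
  norm_smul' : ∀ (c : ℂ) s, cnorm (c • s) = ‖c‖ * cnorm s
  norm_mul' : ∀ s t, cnorm (mul s t) ≤ cnorm s * cnorm t
  norm_star' : ∀ s, cnorm (star' s) = cnorm s
  norm_cstar : ∀ s, cnorm (mul (star' s) s) = cnorm s * cnorm s

namespace RawCStarAlg
variable {E : Type u} [AddCommGroup E] [Module ℂ E] (ra : RawCStarAlg E)

/-- The ring structure on `E` determined by a `RawCStarAlg`. -/
def ringStr : Ring E :=
  { (inferInstance : AddCommGroup E) with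
    mul := fun s t => ra.mul s t
    one := ra.one
    mul_assoc := ra.mul_assoc'
    one_mul := ra.one_mul'
    mul_one := ra.mul_one'
    left_distrib := fun s t r => map_add (ra.mul s) t r
    right_distrib := fun s t r => by
      show ra.mul (s + t) r = ra.mul s r + ra.mul t r
      rw [map_add, LinearMap.add_apply]
    zero_mul := fun s => by
      show ra.mul 0 s = 0
      rw [map_zero, LinearMap.zero_apply]
    mul_zero := fun s => by
      show ra.mul s 0 = 0
      rw [map_zero] }

/-- The `ℂ`-algebra structure on `E` determined by a `RawCStarAlg`. -/
def algStr : @Algebra ℂ E _ (ra.ringStr.toSemiring) :=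
  letI := ra.ringStr
  @Algebra.ofModule ℂ E _ _ ‹Module ℂ E›
    (fun c s t => by
      show ra.mul (c • s) t = c • ra.mul s t
      exact LinearMap.map_smul₂ ra.mul c s t)
    (fun c s t => by
      show ra.mul s (c • t) = c • ra.mul s t
      exact (ra.mul s).map_smul' c t)

/-- The star ring structure on `E` determined by a `RawCStarAlg`. -/
def starStr : @StarRing E (ra.ringStr.toNonUnitalNonAssocSemiring) :=
  letI := ra.ringStr
  { star := ra.star'
    star_involutive := ra.star_invol
    star_mul := ra.star_mul''
    star_add := ra.star_add' }

end RawCStarAlg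

/-! ### Crossed products by finite dimensional C*-Hopf algebras -/

section CrossedDefs
variable {H H0 : Type u} [Ring H] [Algebra ℂ H] [StarRing H] [StarModule ℂ H]
    [FiniteDimensional ℂ H] [Ring H0] [Algebra ℂ H0] [StarRing H0] [StarModule ℂ H0]
    [FiniteDimensional ℂ H0]

/-- Iterated comultiplication `Δ² = (Δ ⊗ id) ∘ Δ`. -/
def comul2 (d : HopfAlgData H) : H →ₗ[ℂ] (H ⊗[ℂ] H) ⊗[ℂ] H :=
  TensorProduct.map d.comul.toLinearMap LinearMap.id ∘ₗ d.comul.toLinearMap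

/-- Iterated comultiplication `Δ³`. -/
def comul3 (d : HopfAlgData H) : H →ₗ[ℂ] ((H ⊗[ℂ] H) ⊗[ℂ] H) ⊗[ℂ] H :=
  TensorProduct.map (TensorProduct.map d.comul.toLinearMap LinearMap.id) LinearMap.id
    ∘ₗ comul2 d

/-- Iterated comultiplication `Δ⁴`. -/
def comul4 (d : HopfAlgData H) :
    H →ₗ[ℂ] (((H ⊗[ℂ] H) ⊗[ℂ] H) ⊗[ℂ] H) ⊗[ℂ] H :=
  TensorProduct.map
    (TensorProduct.map (TensorProduct.map d.comul.toLinearMap LinearMap.id) LinearMap.id)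
    LinearMap.id ∘ₗ comul3 d

variable {A : Type u} [Ring A] [Algebra ℂ A] [StarRing A]

/-- `û(h, l) = (id ⊗ h ⊗ l)(u)` for `u ∈ A ⊗ H0 ⊗ H0` and `h, l ∈ H`. -/
def uhat (dp : HopfPairData H H0) (u : (A ⊗[ℂ] H0) ⊗[ℂ] H0) (h l : H) : A :=
  appRight (dp.pair h) (appRight (dp.pair l) u)

/-- A realization of the crossed product `A ⋊_ρ H` of a coaction `ρ` of `H0` on `A`:
a unital C*-algebra structure on the vector space `A ⊗ H` satisfying
`(a ⋊ h)(b ⋊ l) = a[h₍₁₎ ·_ρ b] ⋊ h₍₂₎ l` and `(a ⋊ h)* = [h₍₁₎* ·_ρ a*] ⋊ h₍₂₎*`. -/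
structure CrossedAlg (dp : HopfPairData H H0) (ρ : A →ₗ[ℂ] A ⊗[ℂ] H0)
    extends RawCStarAlg (A ⊗[ℂ] H) where
  one_def : one = (1 : A) ⊗ₜ (1 : H)
  mul_char : ∀ (a b : A) (h l : H) (n : ℕ) (h1 h2 : Fin n → H),
      dp.dH.comul h = ∑ i, h1 i ⊗ₜ h2 i →
      mul (a ⊗ₜ h) (b ⊗ₜ l) = ∑ i, (a * coactAct dp ρ (h1 i) b) ⊗ₜ (h2 i * l)
  star_char : ∀ (a : A) (h : H) (n : ℕ) (h1 h2 : Fin n → H),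
      dp.dH.comul h = ∑ i, h1 i ⊗ₜ h2 i →
      star' (a ⊗ₜ h) = ∑ i, coactAct dp ρ (star (h1 i)) (star a) ⊗ₜ star (h2 i)

/-- A realization of the twisted crossed product `A ⋊_{ρ,u} H` of a twisted coaction
`(ρ, u)` of `H0` on `A`: a unital C*-algebra structure on the vector space `A ⊗ H` with the
canonical involution, satisfying
`(a ⋊ h)(b ⋊ l) = a[h₍₁₎ ·_{ρ,u} b]û(h₍₂₎,l₍₁₎) ⋊ h₍₃₎l₍₂₎`. -/
structure TwCrossedAlg (dp : HopfPairData H H0) (ρ : A →ₗ[ℂ] A ⊗[ℂ] H0)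
    (u : (A ⊗[ℂ] H0) ⊗[ℂ] H0) extends RawCStarAlg (A ⊗[ℂ] H) where
  one_def : one = (1 : A) ⊗ₜ (1 : H)
  mul_char : ∀ (a b : A) (h l : H) (n : ℕ) (h1 h2 h3 : Fin n → H)
      (m : ℕ) (l1 l2 : Fin m → H),
      comul2 dp.dH h = ∑ i, (h1 i ⊗ₜ h2 i) ⊗ₜ h3 i →
      dp.dH.comul l = ∑ j, l1 j ⊗ₜ l2 j →
      mul (a ⊗ₜ h) (b ⊗ₜ l)
        = ∑ i, ∑ j,
            (a * coactAct dp ρ (h1 i) b * uhat dp u (h2 i) (l1 j)) ⊗ₜ (h3 i * l2 j)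

/-- The dual coaction `ρ̂(a ⋊ h) = (a ⋊ h₍₁₎) ⊗ h₍₂₎` of `H` on the crossed product
`A ⋊ H` (whose underlying vector space is `A ⊗ H`). -/
def dualCoact (d : HopfAlgData H) (A : Type u) [AddCommGroup A] [Module ℂ A] :
    (A ⊗[ℂ] H) →ₗ[ℂ] (A ⊗[ℂ] H) ⊗[ℂ] H :=
  (TensorProduct.assoc ℂ A H H).symm.toLinearMap
    ∘ₗ TensorProduct.map LinearMap.id d.comul.toLinearMap

end CrossedDefs

/-! ### Hilbert bimodules over raw C*-algebra structures -/

section Over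
variable {E F Y : Type u} [AddCommGroup E] [Module ℂ E] [AddCommGroup F] [Module ℂ F]
  [AddCommGroup Y] [Module ℂ Y]

/-- A Hilbert bimodule structure on `Y` over two raw C*-algebra structures (on the complex
vector spaces `E` and `F`); this is the analogue of `Bimod` used when the algebras are
crossed products presented on tensor product vector spaces. -/
structure BimodOver (raE : RawCStarAlg E) (raF : RawCStarAlg F)
    (Y : Type u) [AddCommGroup Y] [Module ℂ Y] where
  ls : E → Y → Y
  rs : Y → F → Y
  linn : Y → Y → E
  rinn : Y → Y → F
  ls_one : ∀ y, ls raE.one y = y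
  ls_mul : ∀ e e' y, ls (raE.mul e e') y = ls e (ls e' y)
  ls_add : ∀ e e' y, ls (e + e') y = ls e y + ls e' y
  ls_add' : ∀ e y y', ls e (y + y') = ls e y + ls e y'
  ls_smul : ∀ (c : ℂ) e y, ls (c • e) y = c • ls e y
  ls_smul' : ∀ (c : ℂ) e y, ls e (c • y) = c • ls e y
  rs_one : ∀ y, rs y raF.one = y
  rs_mul : ∀ y f f', rs y (raF.mul f f') = rs (rs y f) f'
  rs_add : ∀ y f f', rs y (f + f') = rs y f + rs y f'
  rs_add' : ∀ y y' f, rs (y + y') f = rs y f + rs y' f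
  rs_smul : ∀ (c : ℂ) y f, rs y (c • f) = c • rs y f
  rs_smul' : ∀ (c : ℂ) y f, rs (c • y) f = c • rs y f
  ls_rs : ∀ e y f, ls e (rs y f) = rs (ls e y) f
  linn_add_left : ∀ x y z, linn (x + y) z = linn x z + linn y z
  linn_add_right : ∀ x y z, linn x (y + z) = linn x y + linn x z
  rinn_add_left : ∀ x y z, rinn (x + y) z = rinn x z + rinn y z
  rinn_add_right : ∀ x y z, rinn x (y + z) = rinn x y + rinn x z
  linn_smul_left : ∀ (c : ℂ) x y, linn (c • x) y = c • linn x y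
  linn_smul_right : ∀ (c : ℂ) x y, linn x (c • y) = starRingEnd ℂ c • linn x y
  rinn_smul_left : ∀ (c : ℂ) x y, rinn (c • x) y = starRingEnd ℂ c • rinn x y
  rinn_smul_right : ∀ (c : ℂ) x y, rinn x (c • y) = c • rinn x y
  linn_star : ∀ x y, raE.star' (linn x y) = linn y x
  rinn_star : ∀ x y, raF.star' (rinn x y) = rinn y x
  linn_ls : ∀ e x y, linn (ls e x) y = raE.mul e (linn x y)
  rinn_rs : ∀ x y f, rinn x (rs y f) = raF.mul (rinn x y) f
  linn_rs : ∀ x y f, linn (rs x f) y = linn x (rs y (raF.star' f))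
  rinn_ls : ∀ e x y, rinn (ls e x) y = rinn x (ls (raE.star' e) y)
  linn_pos : ∀ x, ∃ e, linn x x = raE.mul (raE.star' e) e
  rinn_pos : ∀ x, ∃ f, rinn x x = raF.mul (raF.star' f) f
  rinn_def : ∀ x, rinn x x = 0 → x = 0

variable {raE : RawCStarAlg E} {raF : RawCStarAlg F}

/-- Finite type, for bimodules over raw C*-algebra structures. -/
def BimodOver.FiniteType (bmo : BimodOver raE raF Y) : Prop :=
  (∃ (n : ℕ) (u : Fin n → Y), ∀ y, ∑ i, bmo.rs (u i) (bmo.rinn (u i) y) = y) ∧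
  (∃ (m : ℕ) (v : Fin m → Y), ∀ y, ∑ j, bmo.ls (bmo.linn y (v j)) (v j) = y)

/-- Equivalence bimodule, for bimodules over raw C*-algebra structures. -/
def BimodOver.IsEquivalence (bmo : BimodOver raE raF Y) : Prop :=
  (∀ x y z, bmo.ls (bmo.linn x y) z = bmo.rs x (bmo.rinn y z)) ∧
  Submodule.span ℂ (Set.range fun p : Y × Y => bmo.linn p.1 p.2) = ⊤ ∧
  Submodule.span ℂ (Set.range fun p : Y × Y => bmo.rinn p.1 p.2) = ⊤

end Over

section OverCoaction
variable {K : Type u} [Ring K] [Algebra ℂ K] [StarRing K] [StarModule ℂ K]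
  [FiniteDimensional ℂ K]
variable {E F Y : Type u} [AddCommGroup E] [Module ℂ E] [AddCommGroup F] [Module ℂ F]
  [AddCommGroup Y] [Module ℂ Y] {raE : RawCStarAlg E} {raF : RawCStarAlg F}

/-- A coaction of the C*-Hopf algebra `K` (with comultiplication `ΔK`, counit `εK`) on the
Hilbert bimodule `Y` over raw C*-algebra structures, with respect to coactions `θE`, `θF`
of `K` on `E` and `F`. -/
structure IsCoactionBimodOver (ΔK : K →ₗ[ℂ] K ⊗[ℂ] K) (εK : K →ₗ[ℂ] ℂ)
    (bmo : BimodOver raE raF Y) (θE : E →ₗ[ℂ] E ⊗[ℂ] K) (θF : F →ₗ[ℂ] F ⊗[ℂ] K)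
    (lam : Y →ₗ[ℂ] Y ⊗[ℂ] K) : Prop where
  ls_compat : ∀ e y, lam (bmo.ls e y) = tact bmo.ls (θE e) (lam y)
  rs_compat : ∀ y f, lam (bmo.rs y f) = tact bmo.rs (lam y) (θF f)
  linn_compat : ∀ x y, θE (bmo.linn x y) = tinnL bmo.linn (lam x) (lam y)
  rinn_compat : ∀ x y, θF (bmo.rinn x y) = tinnR bmo.rinn (lam x) (lam y)
  counital : ∀ y, appRight εK (lam y) = y
  coassoc : ∀ y, TensorProduct.map lam LinearMap.id (lam y)
      = (TensorProduct.assoc ℂ Y K K).symm (TensorProduct.map LinearMap.id ΔK (lam y))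

/-- Strong Morita equivalence of two coactions of `K` on (raw) C*-algebras `E`, `F`. -/
def CoactSMEOver (ΔK : K →ₗ[ℂ] K ⊗[ℂ] K) (εK : K →ₗ[ℂ] ℂ)
    (raE : RawCStarAlg E) (raF : RawCStarAlg F)
    (θE : E →ₗ[ℂ] E ⊗[ℂ] K) (θF : F →ₗ[ℂ] F ⊗[ℂ] K) : Prop :=
  ∃ (Y : Type u) (_ : AddCommGroup Y) (_ : Module ℂ Y) (bmo : BimodOver raE raF Y),
    bmo.IsEquivalence ∧
      ∃ lam : Y →ₗ[ℂ] Y ⊗[ℂ] K, IsCoactionBimodOver ΔK εK bmo θE θF lam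

end OverCoaction

/-! ### Crossed product bimodules: characterizations -/

section CrossedBimod
variable {H H0 : Type u} [Ring H] [Algebra ℂ H] [StarRing H] [StarModule ℂ H]
    [FiniteDimensional ℂ H] [Ring H0] [Algebra ℂ H0] [StarRing H0] [StarModule ℂ H0]
    [FiniteDimensional ℂ H0]
variable {A B X : Type u} [Ring A] [Algebra ℂ A] [StarRing A]
    [Ring B] [Algebra ℂ B] [StarRing B] [AddCommGroup X] [Module ℂ X]

/-- The characterization of the crossed product bimodule `X ⋊_λ H` (underlying vector space
`X ⊗ H`) over the crossed products `A ⋊_ρ H` and `B ⋊_σ H`, for a covariant system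
`(A, B, X, ρ, σ, λ, H0)`:
`(a ⋊ h)(x ⋊ l) = a[h₍₁₎ ·_λ x] ⋊ h₍₂₎ l`, `(x ⋊ l)(b ⋊ m) = x[l₍₁₎ ·_σ b] ⋊ l₍₂₎ m`,
`_{A⋊H}⟨x ⋊ h, y ⋊ l⟩ = _A⟨x, [S(h₍₁₎l₍₁₎*)* ·_λ y]⟩ ⋊ h₍₂₎l₍₂₎*`,
`⟨x ⋊ h, y ⋊ l⟩_{B⋊H} = [h₍₁₎* ·_σ ⟨x,y⟩_B] ⋊ h₍₂₎* l`. -/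
structure CrossedBimodChar (dp : HopfPairData H H0) (bm : Bimod A B X)
    (ρ : A →ₗ[ℂ] A ⊗[ℂ] H0) (σ : B →ₗ[ℂ] B ⊗[ℂ] H0) (lam : X →ₗ[ℂ] X ⊗[ℂ] H0)
    (caA : CrossedAlg dp ρ) (caB : CrossedAlg dp σ)
    (bmC : BimodOver caA.toRawCStarAlg caB.toRawCStarAlg (X ⊗[ℂ] H)) : Prop where
  ls_char : ∀ (a : A) (x : X) (h l : H) (n : ℕ) (h1 h2 : Fin n → H),
      dp.dH.comul h = ∑ i, h1 i ⊗ₜ h2 i →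
      bmC.ls (a ⊗ₜ h) (x ⊗ₜ l)
        = ∑ i, bm.ls a (coactAct dp lam (h1 i) x) ⊗ₜ (h2 i * l)
  rs_char : ∀ (x : X) (b : B) (l m : H) (n : ℕ) (l1 l2 : Fin n → H),
      dp.dH.comul l = ∑ i, l1 i ⊗ₜ l2 i →
      bmC.rs (x ⊗ₜ l) (b ⊗ₜ m)
        = ∑ i, bm.rs x (coactAct dp σ (l1 i) b) ⊗ₜ (l2 i * m)
  linn_char : ∀ (x y : X) (h l : H) (n : ℕ) (h1 h2 : Fin n → H)
      (m : ℕ) (l1 l2 : Fin m → H),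
      dp.dH.comul h = ∑ i, h1 i ⊗ₜ h2 i →
      dp.dH.comul l = ∑ j, l1 j ⊗ₜ l2 j →
      bmC.linn (x ⊗ₜ h) (y ⊗ₜ l)
        = ∑ i, ∑ j, bm.linn x
            (coactAct dp lam (star (dp.dH.antipode (h1 i * star (l1 j)))) y)
            ⊗ₜ (h2 i * star (l2 j))
  rinn_char : ∀ (x y : X) (h l : H) (n : ℕ) (h1 h2 : Fin n → H),
      dp.dH.comul h = ∑ i, h1 i ⊗ₜ h2 i →
      bmC.rinn (x ⊗ₜ h) (y ⊗ₜ l)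
        = ∑ i, coactAct dp σ (star (h1 i)) (bm.rinn x y) ⊗ₜ (star (h2 i) * l)

/-- The characterization of the twisted crossed product bimodule `X ⋊_λ H` over the twisted
crossed products `A ⋊_{ρ,u} H` and `B ⋊_{σ,v} H`, for a twisted covariant system
`(A, B, X, ρ, u, σ, v, λ, H0)`:
`(a ⋊ h)(x ⋊ l) = a[h₍₁₎ ·_λ x]v̂(h₍₂₎,l₍₁₎) ⋊ h₍₃₎l₍₂₎`,
`(x ⋊ l)(b ⋊ m) = x[l₍₁₎ ·_{σ,v} b]v̂(l₍₂₎,m₍₁₎) ⋊ l₍₃₎m₍₂₎`,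
`_{A⋊H}⟨x ⋊ h, y ⋊ l⟩ = _A⟨x, [S(h₍₂₎l₍₃₎*)* ·_λ y]v̂(S(h₍₁₎l₍₂₎*)*, l₍₁₎)⟩ ⋊ h₍₃₎l₍₄₎*`,
`⟨x ⋊ h, y ⋊ l⟩_{B⋊H} = v̂*(h₍₂₎*, S(h₍₁₎)*)[h₍₃₎* ·_{σ,v} ⟨x,y⟩_B]v̂(h₍₄₎*, l₍₁₎) ⋊ h₍₅₎*l₍₂₎`. -/
structure TwCrossedBimodChar (dp : HopfPairData H H0) (bm : Bimod A B X)
    (ρ : A →ₗ[ℂ] A ⊗[ℂ] H0) (u : (A ⊗[ℂ] H0) ⊗[ℂ] H0)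
    (σ : B →ₗ[ℂ] B ⊗[ℂ] H0) (v : (B ⊗[ℂ] H0) ⊗[ℂ] H0) (lam : X →ₗ[ℂ] X ⊗[ℂ] H0)
    (caA : TwCrossedAlg dp ρ u) (caB : TwCrossedAlg dp σ v)
    (bmC : BimodOver caA.toRawCStarAlg caB.toRawCStarAlg (X ⊗[ℂ] H)) : Prop where
  ls_char : ∀ (a : A) (x : X) (h l : H) (n : ℕ) (h1 h2 h3 : Fin n → H)
      (m : ℕ) (l1 l2 : Fin m → H),
      comul2 dp.dH h = ∑ i, (h1 i ⊗ₜ h2 i) ⊗ₜ h3 i →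
      dp.dH.comul l = ∑ j, l1 j ⊗ₜ l2 j →
      bmC.ls (a ⊗ₜ h) (x ⊗ₜ l)
        = ∑ i, ∑ j, bm.ls a
            (bm.rs (coactAct dp lam (h1 i) x) (uhat dp v (h2 i) (l1 j)))
            ⊗ₜ (h3 i * l2 j)
  rs_char : ∀ (x : X) (b : B) (l m : H) (n : ℕ) (l1 l2 l3 : Fin n → H)
      (k : ℕ) (m1 m2 : Fin k → H),
      comul2 dp.dH l = ∑ i, (l1 i ⊗ₜ l2 i) ⊗ₜ l3 i →
      dp.dH.comul m = ∑ j, m1 j ⊗ₜ m2 j →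
      bmC.rs (x ⊗ₜ l) (b ⊗ₜ m)
        = ∑ i, ∑ j, bm.rs x
            (coactAct dp σ (l1 i) b * uhat dp v (l2 i) (m1 j))
            ⊗ₜ (l3 i * m2 j)
  linn_char : ∀ (x y : X) (h l : H) (n : ℕ) (h1 h2 h3 : Fin n → H)
      (m : ℕ) (l1 l2 l3 l4 : Fin m → H),
      comul2 dp.dH h = ∑ i, (h1 i ⊗ₜ h2 i) ⊗ₜ h3 i →
      comul3 dp.dH l = ∑ j, ((l1 j ⊗ₜ l2 j) ⊗ₜ l3 j) ⊗ₜ l4 j →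
      bmC.linn (x ⊗ₜ h) (y ⊗ₜ l)
        = ∑ i, ∑ j, bm.linn x
            (bm.rs (coactAct dp lam (star (dp.dH.antipode (h2 i * star (l3 j)))) y)
              (uhat dp v (star (dp.dH.antipode (h1 i * star (l2 j)))) (l1 j)))
            ⊗ₜ (h3 i * star (l4 j))
  rinn_char : ∀ (x y : X) (h l : H) (n : ℕ) (h1 h2 h3 h4 h5 : Fin n → H)
      (m : ℕ) (l1 l2 : Fin m → H),
      comul4 dp.dH h = ∑ i, (((h1 i ⊗ₜ h2 i) ⊗ₜ h3 i) ⊗ₜ h4 i) ⊗ₜ h5 i →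
      dp.dH.comul l = ∑ j, l1 j ⊗ₜ l2 j →
      bmC.rinn (x ⊗ₜ h) (y ⊗ₜ l)
        = ∑ i, ∑ j,
            (uhat dp (tstarWith (tstarWith star) v) (star (h2 i))
                (star (dp.dH.antipode (h1 i)))
              * coactAct dp σ (star (h3 i)) (bm.rinn x y)
              * uhat dp v (star (h4 i)) (l1 j))
            ⊗ₜ (star (h5 i) * l2 j)

end CrossedBimod

/-!
Both inner products and both actions on `X ⋊ H` are additive, and `x ⋊ m = (x ⋊ 1)(1 ⋊ m)`, so
the module axioms reduce associativity to `ξ = x ⋊ h`, `η = y ⋊ 1`, `ζ = z ⋊ 1`. There the twist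
drops out, because `v̂(k, 1) = v̂(1, k) = ε(k)1`, and the two sides become
`∑ _A⟨x, S(h₍₁₎)*·y⟩ (h₍₂₎·z) ⋊ h₍₃₎` and `∑ x (h₍₁₎·⟨y, z⟩_B) ⋊ h₍₂₎`. Associativity in `X` and
coassociativity of `Δ` turn the first into `∑ x ⟨S(h₍₁₎)*·y, h₍₂₎·z⟩_B ⋊ h₍₃₎`, and covariance of
`λ` for the right inner product gives `∑ ⟨S(k₍₁₎)*·y, k₍₂₎·z⟩_B = k·⟨y, z⟩_B`.
Fullness holds because `⟨x ⋊ 1, y ⋊ 1⟩ = ⟨x, y⟩ ⋊ 1`, so `1 ⋊ 1` lies in the span of each inner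
product, and that span is a one-sided ideal.
-/

section TensorAux
variable {M N P C : Type*} [AddCommGroup M] [Module ℂ M] [AddCommGroup N] [Module ℂ N]
  [AddCommGroup P] [Module ℂ P] [AddCommGroup C] [Module ℂ C]

@[simp]
theorem appRight_tmul (f : C →ₗ[ℂ] ℂ) (m : M) (c : C) : appRight f (m ⊗ₜ[ℂ] c) = f c • m := by
  simp [appRight]

theorem appRight_add (f g : C →ₗ[ℂ] ℂ) (t : M ⊗[ℂ] C) :
    appRight (f + g) t = appRight f t + appRight g t := by
  simp [appRight, TensorProduct.map_add_right]

theorem appRight_smul (c : ℂ) (f : C →ₗ[ℂ] ℂ) (t : M ⊗[ℂ] C) :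
    appRight (c • f) t = c • appRight f t := by
  simp [appRight, TensorProduct.map_smul_right]

theorem sum_tcoord_tmul [FiniteDimensional ℂ C] (t : M ⊗[ℂ] C) :
    ∑ i, tcoord i t ⊗ₜ[ℂ] Module.finBasis ℂ C i = t := by
  induction t using TensorProduct.induction_on with
  | zero => simp
  | tmul m c =>
    simp only [tcoord, appRight_tmul, Module.Basis.coord_apply, TensorProduct.smul_tmul]
    rw [← TensorProduct.tmul_sum, Module.Basis.sum_repr]
  | add s t hs ht => simp only [map_add, TensorProduct.add_tmul, Finset.sum_add_distrib, hs, ht]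

theorem exists_sum_tmul_tmul_eq (t : (M ⊗[ℂ] N) ⊗[ℂ] P) :
    ∃ (k : ℕ) (m : Fin k → M) (n : Fin k → N) (p : Fin k → P),
      t = ∑ j, (m j ⊗ₜ n j) ⊗ₜ p j := by
  induction t with
  | zero => exact ⟨0, finZeroElim, finZeroElim, finZeroElim, by simp⟩
  | tmul s q =>
    obtain ⟨k, m, n, rfl⟩ := TensorProduct.exists_sum_tmul_eq s
    exact ⟨k, m, n, fun _ => q, TensorProduct.sum_tmul _ _ _⟩
  | add s t hs ht =>
    obtain ⟨k, m, n, p, rfl⟩ := hs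
    obtain ⟨k', m', n', p', rfl⟩ := ht
    exact ⟨k + k', Fin.addCases m m', Fin.addCases n n', Fin.addCases p p',
      by simp [Fin.sum_univ_add]⟩

theorem assoc_symm_tmul_eq_rTensor (c : M) (t : N ⊗[ℂ] P) :
    (TensorProduct.assoc ℂ M N P).symm (c ⊗ₜ t) = (TensorProduct.mk ℂ M N c).rTensor P t := by
  induction t using TensorProduct.induction_on with
  | zero => simp
  | tmul n p => rfl
  | add s t hs ht => simp only [TensorProduct.tmul_add, map_add, hs, ht]

theorem closure_tmul_eq_top :
    AddSubmonoid.closure {t : M ⊗[ℂ] N | ∃ m n, m ⊗ₜ n = t} = ⊤ := by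
  refine eq_top_iff.mpr fun t _ => ?_
  induction t using TensorProduct.induction_on with
  | zero => exact zero_mem _
  | tmul m n => exact AddSubmonoid.subset_closure ⟨m, n, rfl⟩
  | add s t hs ht => exact add_mem (hs trivial) (ht trivial)

theorem map_mem_span_range_of_span_eq_top {ι κ : Type*} {φ : ι → M} {ψ : κ → N}
    (hφ : Submodule.span ℂ (Set.range φ) = ⊤) (f : M →ₗ[ℂ] N) (g : ι → κ)
    (hfg : ∀ i, ψ (g i) = f (φ i)) (m : M) : f m ∈ Submodule.span ℂ (Set.range ψ) := by
  have hle : (Submodule.span ℂ (Set.range φ)).map f ≤ Submodule.span ℂ (Set.range ψ) := by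
    rw [Submodule.map_span, ← Set.range_comp]
    exact Submodule.span_mono (by rintro _ ⟨i, rfl⟩; exact ⟨g i, hfg i⟩)
  exact hle ⟨m, hφ ▸ Submodule.mem_top, rfl⟩

variable {D : Type*} [Ring D] [Algebra ℂ D] [StarRing D] [FiniteDimensional ℂ D]

theorem tstarWith_add (sM : M → M) (hadd : ∀ a b, sM (a + b) = sM a + sM b) (s t : M ⊗[ℂ] D) :
    tstarWith sM (s + t) = tstarWith sM s + tstarWith sM t := by
  simp only [tstarWith, map_add, hadd, TensorProduct.add_tmul, Finset.sum_add_distrib]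

theorem tstarWith_smul (sM : M → M) (hsmul : ∀ (r : ℂ) a, sM (r • a) = starRingEnd ℂ r • sM a)
    (r : ℂ) (t : M ⊗[ℂ] D) : tstarWith sM (r • t) = starRingEnd ℂ r • tstarWith sM t := by
  simp only [tstarWith, map_smul, hsmul, Finset.smul_sum, TensorProduct.smul_tmul']

theorem appRight_tstarWith (ε : D →ₗ[ℂ] ℂ) (hε : ∀ c, ε (star c) = starRingEnd ℂ (ε c))
    (sM : M → M) (hadd : ∀ a b, sM (a + b) = sM a + sM b)
    (hsmul : ∀ (r : ℂ) a, sM (r • a) = starRingEnd ℂ r • sM a) (t : M ⊗[ℂ] D) :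
    appRight ε (tstarWith sM t) = sM (appRight ε t) := by
  conv_rhs => rw [← sum_tcoord_tmul t]
  simp only [tstarWith, map_sum, appRight_tmul, hε, ← hsmul]
  exact (map_sum (AddMonoidHom.mk' sM hadd) _ _).symm

end TensorAux

section Hopf
variable {H H0 : Type u} [Ring H] [Algebra ℂ H] [StarRing H] [StarModule ℂ H]
    [FiniteDimensional ℂ H] [Ring H0] [Algebra ℂ H0] [StarRing H0] [StarModule ℂ H0]
    [FiniteDimensional ℂ H0]

theorem HopfAlgData.comul_one (dh : HopfAlgData H) : dh.comul 1 = (1 : H) ⊗ₜ[ℂ] (1 : H) := by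
  rw [map_one, Algebra.TensorProduct.one_def]

theorem comul2_one (dh : HopfAlgData H) :
    comul2 dh 1 = ((1 : H) ⊗ₜ[ℂ] (1 : H)) ⊗ₜ[ℂ] (1 : H) := by
  simp [comul2, dh.comul_one]

theorem comul3_one (dh : HopfAlgData H) :
    comul3 dh 1 = (((1 : H) ⊗ₜ[ℂ] (1 : H)) ⊗ₜ[ℂ] (1 : H)) ⊗ₜ[ℂ] (1 : H) := by
  simp [comul3, comul2_one, dh.comul_one]

theorem comul4_one (dh : HopfAlgData H) :
    comul4 dh 1 = ((((1 : H) ⊗ₜ[ℂ] (1 : H)) ⊗ₜ[ℂ] (1 : H)) ⊗ₜ[ℂ] (1 : H)) ⊗ₜ[ℂ] (1 : H) := by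
  simp [comul4, comul3_one, dh.comul_one]

theorem HopfAlgData.antipode_one (dh : HopfAlgData H) : dh.antipode 1 = 1 := by
  simpa using dh.antipode_left 1 1 (fun _ => 1) (fun _ => 1) (by simp [dh.comul_one])

theorem HopfAlgData.rTensor_comp_comul2 {M : Type*} [AddCommGroup M] [Module ℂ M]
    (dh : HopfAlgData H) {L : H ⊗[ℂ] H →ₗ[ℂ] H} (hL : ∀ k, L (dh.comul k) = k)
    (G : H →ₗ[ℂ] M) (h : H) :
    (G ∘ₗ L).rTensor H (comul2 dh h) = G.rTensor H (dh.comul h) := by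
  have hGL : G ∘ₗ L ∘ₗ dh.comul.toLinearMap = G := LinearMap.ext fun k => by simp [hL]
  rw [comul2, LinearMap.comp_apply, ← LinearMap.rTensor_def, ← LinearMap.rTensor_comp_apply,
    LinearMap.comp_assoc, hGL, AlgHom.toLinearMap_apply]

theorem HopfPairData.pair_one_eq_counit (dp : HopfPairData H H0) :
    dp.pair 1 = dp.dH0.counit.toLinearMap :=
  LinearMap.ext dp.pair_one_left

theorem HopfPairData.counit_antipode (dp : HopfPairData H H0) (h : H) :
    dp.dH.counit (dp.dH.antipode h) = dp.dH.counit h := by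
  rw [← dp.pair_one_right, dp.pair_antipode, dp.dH0.antipode_one, dp.pair_one_right]

end Hopf

section Coaction
variable {H H0 : Type u} [Ring H] [Algebra ℂ H] [StarRing H] [StarModule ℂ H]
    [FiniteDimensional ℂ H] [Ring H0] [Algebra ℂ H0] [StarRing H0] [StarModule ℂ H0]
    [FiniteDimensional ℂ H0]
variable {M : Type u} [AddCommGroup M] [Module ℂ M]

theorem coactAct_one (dp : HopfPairData H H0) {μ : M →ₗ[ℂ] M ⊗[ℂ] H0}
    (hμ : ∀ m, appRight dp.dH0.counit.toLinearMap (μ m) = m) (m : M) :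
    coactAct dp μ 1 m = m := by
  rw [coactAct, dp.pair_one_eq_counit, hμ]

theorem coactAct_eq_sum (dp : HopfPairData H H0) (μ : M →ₗ[ℂ] M ⊗[ℂ] H0) (k : H) (m : M) :
    coactAct dp μ k m = ∑ i, dp.pair k (Module.finBasis ℂ H0 i) • tcoord i (μ m) := by
  conv_lhs => rw [coactAct, ← sum_tcoord_tmul (μ m)]
  simp only [map_sum, appRight_tmul]

def coactActLin (dp : HopfPairData H H0) (μ : M →ₗ[ℂ] M ⊗[ℂ] H0) (m : M) : H →ₗ[ℂ] M where
  toFun k := coactAct dp μ k m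
  map_add' k k' := by simp only [coactAct, map_add, appRight_add]
  map_smul' c k := by simp only [coactAct, map_smul, appRight_smul, RingHom.id_apply]

@[simp]
theorem coactActLin_apply (dp : HopfPairData H H0) (μ : M →ₗ[ℂ] M ⊗[ℂ] H0) (m : M) (k : H) :
    coactActLin dp μ m k = coactAct dp μ k m := rfl

variable {B : Type u} [Ring B] [Algebra ℂ B] [StarRing B]
  {Δ0 : H0 →ₗ[ℂ] H0 ⊗[ℂ] H0} {σ : B →ₗ[ℂ] B ⊗[ℂ] H0} {v : (B ⊗[ℂ] H0) ⊗[ℂ] H0}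

theorem IsTwistedCoaction.uhat_right_one (dp : HopfPairData H H0)
    (hσv : IsTwistedCoaction Δ0 dp.dH0.counit.toLinearMap σ v) (k : H) :
    uhat dp v k 1 = dp.dH.counit k • (1 : B) := by
  rw [uhat, dp.pair_one_eq_counit, hσv.counit_mid, dp.pair_one_right]

theorem IsTwistedCoaction.uhat_left_one (dp : HopfPairData H H0)
    (hσv : IsTwistedCoaction Δ0 dp.dH0.counit.toLinearMap σ v) (k : H) :
    uhat dp v 1 k = dp.dH.counit k • (1 : B) := by
  rw [uhat, dp.pair_one_eq_counit, hσv.counit_out, dp.pair_one_right]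

theorem IsTwistedCoaction.uhat_star_one_one [StarModule ℂ B] (dp : HopfPairData H H0)
    (hσv : IsTwistedCoaction Δ0 dp.dH0.counit.toLinearMap σ v) :
    uhat dp (tstarWith (tstarWith star) v) 1 1 = (1 : B) := by
  have hstar : ∀ (r : ℂ) (b : B), star (r • b) = starRingEnd ℂ r • star b := fun r b => by
    rw [star_smul, starRingEnd_apply]
  rw [uhat, dp.pair_one_eq_counit, appRight_tstarWith _ dp.dH0.counit_star _
    (tstarWith_add star star_add) (tstarWith_smul star hstar),
    appRight_tstarWith _ dp.dH0.counit_star star star_add hstar, hσv.counit_mid]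
  simp

end Coaction

namespace BimodOver
variable {E F Y : Type u} [AddCommGroup E] [Module ℂ E] [AddCommGroup F] [Module ℂ F]
  [AddCommGroup Y] [Module ℂ Y] {raE : RawCStarAlg E} {raF : RawCStarAlg F}
  (bmo : BimodOver raE raF Y)

@[simp] theorem ls_zero_left (y : Y) : bmo.ls 0 y = 0 := by
  simpa using bmo.ls_smul 0 0 y

@[simp] theorem ls_zero_right (e : E) : bmo.ls e 0 = 0 := by
  simpa using bmo.ls_smul' 0 e 0

@[simp] theorem rs_zero_left (f : F) : bmo.rs 0 f = 0 := by
  simpa using bmo.rs_smul' 0 0 f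

@[simp] theorem rs_zero_right (y : Y) : bmo.rs y 0 = 0 := by
  simpa using bmo.rs_smul 0 y 0

@[simp] theorem linn_zero_left (y : Y) : bmo.linn 0 y = 0 := by
  simpa using bmo.linn_smul_left 0 0 y

@[simp] theorem linn_zero_right (y : Y) : bmo.linn y 0 = 0 := by
  simpa using bmo.linn_smul_right 0 y 0

@[simp] theorem rinn_zero_left (y : Y) : bmo.rinn 0 y = 0 := by
  simpa using bmo.rinn_smul_left 0 0 y

@[simp] theorem rinn_zero_right (y : Y) : bmo.rinn y 0 = 0 := by
  simpa using bmo.rinn_smul_right 0 y 0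

theorem rinn_rs_left (y z : Y) (f : F) :
    bmo.rinn (bmo.rs y f) z = raF.mul (raF.star' f) (bmo.rinn y z) := by
  rw [← bmo.rinn_star, bmo.rinn_rs, raF.star_mul'', bmo.rinn_star]

theorem linn_rs_right (x y : Y) (f : F) :
    bmo.linn x (bmo.rs y f) = bmo.linn (bmo.rs x (raF.star' f)) y := by
  rw [bmo.linn_rs, raF.star_invol]

theorem assoc_of_closure {T S : Set Y} (hT : AddSubmonoid.closure T = ⊤)
    (hS : AddSubmonoid.closure (Set.image2 bmo.rs S Set.univ) = ⊤)
    (h : ∀ ξ ∈ T, ∀ y ∈ S, ∀ z ∈ S, bmo.ls (bmo.linn ξ y) z = bmo.rs ξ (bmo.rinn y z))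
    (ξ η ζ : Y) : bmo.ls (bmo.linn ξ η) ζ = bmo.rs ξ (bmo.rinn η ζ) := by
  have hξ : ∀ ξ, ∀ y ∈ S, ∀ z ∈ S, bmo.ls (bmo.linn ξ y) z = bmo.rs ξ (bmo.rinn y z) := by
    intro ξ y hy z hz
    induction (hT ▸ AddSubmonoid.mem_top ξ : ξ ∈ AddSubmonoid.closure T)
      using AddSubmonoid.closure_induction with
    | mem ξ hξ => exact h ξ hξ y hy z hz
    | zero => simp
    | add ξ ξ' _ _ h₁ h₂ => rw [bmo.linn_add_left, bmo.ls_add, bmo.rs_add', h₁, h₂]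
  have hζ : ∀ ξ, ∀ y ∈ S, ∀ ζ, bmo.ls (bmo.linn ξ y) ζ = bmo.rs ξ (bmo.rinn y ζ) := by
    intro ξ y hy ζ
    induction (hS ▸ AddSubmonoid.mem_top ζ : ζ ∈ AddSubmonoid.closure _)
      using AddSubmonoid.closure_induction with
    | mem ζ hζ =>
      obtain ⟨z, hz, g, -, rfl⟩ := hζ
      rw [bmo.ls_rs, hξ ξ y hy z hz, bmo.rinn_rs, bmo.rs_mul]
    | zero => simp
    | add ζ ζ' _ _ h₁ h₂ => rw [bmo.ls_add', bmo.rinn_add_right, bmo.rs_add, h₁, h₂]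
  induction (hS ▸ AddSubmonoid.mem_top η : η ∈ AddSubmonoid.closure _)
    using AddSubmonoid.closure_induction with
  | mem η hη =>
    obtain ⟨y, hy, f, -, rfl⟩ := hη
    rw [bmo.linn_rs_right, bmo.rinn_rs_left, bmo.rs_mul, hζ _ y hy]
  | zero => simp
  | add η η' _ _ h₁ h₂ =>
    rw [bmo.linn_add_right, bmo.ls_add, bmo.rinn_add_left, bmo.rs_add, h₁, h₂]

theorem span_linn_eq_top
    (h : raE.one ∈ Submodule.span ℂ (Set.range fun p : Y × Y => bmo.linn p.1 p.2)) :
    Submodule.span ℂ (Set.range fun p : Y × Y => bmo.linn p.1 p.2) = ⊤ := by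
  refine eq_top_iff.mpr fun e _ => ?_
  have hideal : Submodule.span ℂ (Set.range fun p : Y × Y => bmo.linn p.1 p.2) ≤
      (Submodule.span ℂ (Set.range fun p : Y × Y => bmo.linn p.1 p.2)).comap (raE.mul e) :=
    Submodule.span_le.mpr <| by
      rintro _ ⟨p, rfl⟩
      exact Submodule.subset_span ⟨(bmo.ls e p.1, p.2), bmo.linn_ls e p.1 p.2⟩
  simpa [raE.mul_one'] using hideal h

theorem span_rinn_eq_top
    (h : raF.one ∈ Submodule.span ℂ (Set.range fun p : Y × Y => bmo.rinn p.1 p.2)) :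
    Submodule.span ℂ (Set.range fun p : Y × Y => bmo.rinn p.1 p.2) = ⊤ := by
  refine eq_top_iff.mpr fun f _ => ?_
  have hideal : Submodule.span ℂ (Set.range fun p : Y × Y => bmo.rinn p.1 p.2) ≤
      (Submodule.span ℂ (Set.range fun p : Y × Y => bmo.rinn p.1 p.2)).comap (raF.mul.flip f) :=
    Submodule.span_le.mpr <| by
      rintro _ ⟨p, rfl⟩
      exact Submodule.subset_span ⟨(p.1, bmo.rs p.2 f), bmo.rinn_rs p.1 p.2 f⟩
  simpa [raF.one_mul'] using hideal h

end BimodOver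

namespace Bimod
variable {A B X : Type u} [Ring A] [Algebra ℂ A] [StarRing A]
    [Ring B] [Algebra ℂ B] [StarRing B] [AddCommGroup X] [Module ℂ X] (bm : Bimod A B X)

@[simps]
def lsLin (a : A) : X →ₗ[ℂ] X where
  toFun := bm.ls a
  map_add' := bm.ls_add' a
  map_smul' c x := bm.ls_smul' c a x

@[simps]
def rsLin (x : X) : B →ₗ[ℂ] X where
  toFun := bm.rs x
  map_add' := bm.rs_add x
  map_smul' c b := bm.rs_smul c x b

theorem rinn_sum_left {ι : Type*} (s : Finset ι) (f : ι → X) (z : X) :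
    bm.rinn (∑ i ∈ s, f i) z = ∑ i ∈ s, bm.rinn (f i) z :=
  map_sum (AddMonoidHom.mk' (bm.rinn · z) (bm.rinn_add_left · · z)) f s

theorem rinn_sum_right {ι : Type*} (s : Finset ι) (f : ι → X) (z : X) :
    bm.rinn z (∑ i ∈ s, f i) = ∑ i ∈ s, bm.rinn z (f i) :=
  map_sum (AddMonoidHom.mk' (bm.rinn z) (bm.rinn_add_right z)) f s

end Bimod

section AntipodeInner
variable {H H0 : Type u} [Ring H] [Algebra ℂ H] [StarRing H] [StarModule ℂ H]
    [FiniteDimensional ℂ H] [Ring H0] [Algebra ℂ H0] [StarRing H0] [StarModule ℂ H0]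
    [FiniteDimensional ℂ H0]
variable {A B X : Type u} [Ring A] [Algebra ℂ A] [StarRing A]
    [Ring B] [Algebra ℂ B] [StarRing B] [AddCommGroup X] [Module ℂ X]
variable (dp : HopfPairData H H0) (bm : Bimod A B X) (lam : X →ₗ[ℂ] X ⊗[ℂ] H0)

def linnAntipode (x y : X) : H →ₗ[ℂ] A where
  toFun k := bm.linn x (coactActLin dp lam y (star (dp.dH.antipode k)))
  map_add' k k' := by rw [map_add, star_add, map_add, bm.linn_add_right]
  map_smul' c k := by
    rw [map_smul, star_smul, map_smul, bm.linn_smul_right, starRingEnd_apply, star_star,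
      RingHom.id_apply]

@[simp]
theorem linnAntipode_apply (x y : X) (k : H) :
    linnAntipode dp bm lam x y k = bm.linn x (coactAct dp lam (star (dp.dH.antipode k)) y) := rfl

def rinnAntipode (y z : X) : H ⊗[ℂ] H →ₗ[ℂ] B :=
  TensorProduct.lift <| LinearMap.mk₂ ℂ
    (fun k m => bm.rinn (coactActLin dp lam y (star (dp.dH.antipode k))) (coactActLin dp lam z m))
    (fun k k' m => by rw [map_add, star_add, map_add, bm.rinn_add_left])
    (fun c k m => by
      rw [map_smul, star_smul, map_smul, bm.rinn_smul_left, starRingEnd_apply, star_star])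
    (fun k m m' => by rw [map_add, bm.rinn_add_right])
    (fun c k m => by rw [map_smul, bm.rinn_smul_right])

@[simp]
theorem rinnAntipode_tmul (y z : X) (k m : H) :
    rinnAntipode dp bm lam y z (k ⊗ₜ m)
      = bm.rinn (coactAct dp lam (star (dp.dH.antipode k)) y) (coactAct dp lam m z) := rfl

theorem rinn_coactAct_eq_sum (y z : X) (k m : H) :
    bm.rinn (coactAct dp lam (star (dp.dH.antipode k)) y) (coactAct dp lam m z)
      = ∑ i, ∑ j, (dp.pair k (star (Module.finBasis ℂ H0 i)) * dp.pair m (Module.finBasis ℂ H0 j))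
          • bm.rinn (tcoord i (lam y)) (tcoord j (lam z)) := by
  simp only [coactAct_eq_sum, bm.rinn_sum_left, bm.rinn_sum_right, bm.rinn_smul_left,
    bm.rinn_smul_right, smul_smul, dp.pair_star']

variable {dp bm lam} {ε0 : H0 →ₗ[ℂ] ℂ} {ρ : A →ₗ[ℂ] A ⊗[ℂ] H0} {σ : B →ₗ[ℂ] B ⊗[ℂ] H0}

theorem IsWeakCoactionBimod.coactAct_rinn_eq_sum (hlam : IsWeakCoactionBimod ε0 bm ρ σ lam)
    (y z : X) (k : H) :
    coactAct dp σ k (bm.rinn y z)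
      = ∑ i, ∑ j, dp.pair k (star (Module.finBasis ℂ H0 i) * Module.finBasis ℂ H0 j)
          • bm.rinn (tcoord i (lam y)) (tcoord j (lam z)) := by
  simp only [coactAct, hlam.rinn_compat, tinnR, tmix, map_sum, appRight_tmul]

theorem IsWeakCoactionBimod.rinnAntipode_comul (hlam : IsWeakCoactionBimod ε0 bm ρ σ lam)
    (y z : X) (k : H) :
    rinnAntipode dp bm lam y z (dp.dH.comul k) = coactAct dp σ k (bm.rinn y z) := by
  obtain ⟨n, k₁, k₂, hk⟩ := TensorProduct.exists_sum_tmul_eq (dp.dH.comul k)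
  simp only [hk, map_sum, rinnAntipode_tmul, rinn_coactAct_eq_sum, hlam.coactAct_rinn_eq_sum,
    dp.pair_mul_right k _ _ n k₁ k₂ hk, Finset.sum_smul]
  rw [Finset.sum_comm]
  exact Finset.sum_congr rfl fun i _ => Finset.sum_comm

end AntipodeInner

namespace TwCrossedBimodChar
variable {H H0 : Type u} [Ring H] [Algebra ℂ H] [StarRing H] [StarModule ℂ H]
    [FiniteDimensional ℂ H] [Ring H0] [Algebra ℂ H0] [StarRing H0] [StarModule ℂ H0]
    [FiniteDimensional ℂ H0]
variable {A B X : Type u} [Ring A] [Algebra ℂ A] [StarRing A]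
    [Ring B] [Algebra ℂ B] [StarRing B] [AddCommGroup X] [Module ℂ X]
variable {dp : HopfPairData H H0} {bm : Bimod A B X} {lam : X →ₗ[ℂ] X ⊗[ℂ] H0}
    {ρ : A →ₗ[ℂ] A ⊗[ℂ] H0} {u : (A ⊗[ℂ] H0) ⊗[ℂ] H0}
    {σ : B →ₗ[ℂ] B ⊗[ℂ] H0} {v : (B ⊗[ℂ] H0) ⊗[ℂ] H0}
    {caA : TwCrossedAlg dp ρ u} {caB : TwCrossedAlg dp σ v}
    {bmC : BimodOver caA.toRawCStarAlg caB.toRawCStarAlg (X ⊗[ℂ] H)}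
    {Δ0 : H0 →ₗ[ℂ] H0 ⊗[ℂ] H0}

theorem rinn_tmul_one_tmul_one [StarModule ℂ B]
    (hchar : TwCrossedBimodChar dp bm ρ u σ v lam caA caB bmC)
    (hσv : IsTwistedCoaction Δ0 dp.dH0.counit.toLinearMap σ v) (y z : X) :
    bmC.rinn (y ⊗ₜ 1) (z ⊗ₜ 1) = bm.rinn y z ⊗ₜ (1 : H) := by
  rw [hchar.rinn_char y z 1 1 1 (fun _ => 1) (fun _ => 1) (fun _ => 1) (fun _ => 1)
    (fun _ => 1) 1 (fun _ => 1) (fun _ => 1) (by simp [comul4_one]) (by simp [dp.dH.comul_one])]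
  simp [dp.dH.antipode_one, hσv.uhat_star_one_one, hσv.uhat_right_one,
    coactAct_one dp hσv.counital]

theorem linn_tmul_one_tmul_one (hchar : TwCrossedBimodChar dp bm ρ u σ v lam caA caB bmC)
    (hσv : IsTwistedCoaction Δ0 dp.dH0.counit.toLinearMap σ v)
    (hlam : IsWeakCoactionBimod dp.dH0.counit.toLinearMap bm ρ σ lam)
    (x y : X) : bmC.linn (x ⊗ₜ 1) (y ⊗ₜ 1) = bm.linn x y ⊗ₜ (1 : H) := by
  rw [hchar.linn_char x y 1 1 1 (fun _ => 1) (fun _ => 1) (fun _ => 1) 1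
    (fun _ => 1) (fun _ => 1) (fun _ => 1) (fun _ => 1) (by simp [comul2_one])
    (by simp [comul3_one])]
  simp [dp.dH.antipode_one, hσv.uhat_right_one, coactAct_one dp hlam.counital, bm.rs_one]

theorem rs_tmul_one_tmul (hchar : TwCrossedBimodChar dp bm ρ u σ v lam caA caB bmC)
    (hσv : IsTwistedCoaction Δ0 dp.dH0.counit.toLinearMap σ v) (z : X) (b : B) (m : H) :
    bmC.rs (z ⊗ₜ 1) (b ⊗ₜ m) = bm.rs z b ⊗ₜ m := by
  obtain ⟨n, m₁, m₂, hm⟩ := TensorProduct.exists_sum_tmul_eq (dp.dH.comul m)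
  rw [hchar.rs_char z b 1 m 1 (fun _ => 1) (fun _ => 1) (fun _ => 1) n m₁ m₂
    (by simp [comul2_one]) hm]
  conv_rhs => rw [← dp.dH.counit_left m, hm]
  simp [coactAct_one dp hσv.counital, hσv.uhat_left_one, bm.rs_smul, TensorProduct.tmul_sum,
    TensorProduct.smul_tmul']

theorem ls_tmul_tmul_one (hchar : TwCrossedBimodChar dp bm ρ u σ v lam caA caB bmC)
    (hσv : IsTwistedCoaction Δ0 dp.dH0.counit.toLinearMap σ v) (a : A) (z : X) (k : H) :
    bmC.ls (a ⊗ₜ k) (z ⊗ₜ 1)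
      = (bm.lsLin a ∘ₗ coactActLin dp lam z).rTensor H (dp.dH.comul k) := by
  obtain ⟨n, k₁, k₂, k₃, hk⟩ := exists_sum_tmul_tmul_eq (comul2 dp.dH k)
  rw [hchar.ls_char a z k 1 n k₁ k₂ k₃ 1 (fun _ => 1) (fun _ => 1) hk
    (by simp [dp.dH.comul_one]), ← dp.dH.rTensor_comp_comul2 dp.dH.counit_right, hk]
  simp [hσv.uhat_right_one, bm.rs_smul, bm.rs_one, bm.ls_smul']

theorem rs_tmul_tmul_one (hchar : TwCrossedBimodChar dp bm ρ u σ v lam caA caB bmC)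
    (hσv : IsTwistedCoaction Δ0 dp.dH0.counit.toLinearMap σ v) (x : X) (b : B) (h : H) :
    bmC.rs (x ⊗ₜ h) (b ⊗ₜ 1)
      = (bm.rsLin x ∘ₗ coactActLin dp σ b).rTensor H (dp.dH.comul h) := by
  obtain ⟨n, h₁, h₂, h₃, hh⟩ := exists_sum_tmul_tmul_eq (comul2 dp.dH h)
  rw [hchar.rs_char x b h 1 n h₁ h₂ h₃ 1 (fun _ => 1) (fun _ => 1) hh
    (by simp [dp.dH.comul_one]), ← dp.dH.rTensor_comp_comul2 dp.dH.counit_right, hh]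
  simp [hσv.uhat_right_one, bm.rs_smul]

theorem linn_tmul_tmul_one (hchar : TwCrossedBimodChar dp bm ρ u σ v lam caA caB bmC)
    (hσv : IsTwistedCoaction Δ0 dp.dH0.counit.toLinearMap σ v) (x y : X) (h : H) :
    bmC.linn (x ⊗ₜ h) (y ⊗ₜ 1) = (linnAntipode dp bm lam x y).rTensor H (dp.dH.comul h) := by
  obtain ⟨n, h₁, h₂, h₃, hh⟩ := exists_sum_tmul_tmul_eq (comul2 dp.dH h)
  rw [hchar.linn_char x y h 1 n h₁ h₂ h₃ 1 (fun _ => 1) (fun _ => 1) (fun _ => 1) (fun _ => 1)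
    hh (by simp [comul3_one]),
    ← dp.dH.rTensor_comp_comul2 (L := (TensorProduct.lid ℂ H).toLinearMap ∘ₗ
      TensorProduct.map dp.dH.counit.toLinearMap LinearMap.id) dp.dH.counit_left, hh]
  simp [hσv.uhat_right_one, bm.rs_smul, bm.rs_one, bm.linn_smul_right, dp.dH.counit_star,
    dp.counit_antipode]

theorem assoc_tmul_tmul_one_tmul_one [StarModule ℂ B]
    (hchar : TwCrossedBimodChar dp bm ρ u σ v lam caA caB bmC)
    (hσv : IsTwistedCoaction Δ0 dp.dH0.counit.toLinearMap σ v)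
    {ε0 : H0 →ₗ[ℂ] ℂ} (hlam : IsWeakCoactionBimod ε0 bm ρ σ lam)
    (hassoc : ∀ x y z, bm.ls (bm.linn x y) z = bm.rs x (bm.rinn y z)) (x y z : X) (h : H) :
    bmC.ls (bmC.linn (x ⊗ₜ h) (y ⊗ₜ 1)) (z ⊗ₜ 1)
      = bmC.rs (x ⊗ₜ h) (bmC.rinn (y ⊗ₜ 1) (z ⊗ₜ 1)) := by
  have hls : ∀ t : H ⊗[ℂ] H,
      bmC.ls ((linnAntipode dp bm lam x y).rTensor H t) (z ⊗ₜ 1)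
        = (bm.rsLin x ∘ₗ rinnAntipode dp bm lam y z).rTensor H
            ((TensorProduct.assoc ℂ H H H).symm
              (TensorProduct.map LinearMap.id dp.dH.comul.toLinearMap t)) := by
    intro t
    induction t using TensorProduct.induction_on with
    | zero => simp
    | tmul k₁ k₂ =>
      rw [LinearMap.rTensor_tmul, hchar.ls_tmul_tmul_one hσv, TensorProduct.map_tmul,
        LinearMap.id_apply, AlgHom.toLinearMap_apply, assoc_symm_tmul_eq_rTensor,
        ← LinearMap.rTensor_comp_apply]
      congr 2
      ext k
      simp [hassoc]
    | add s t hs ht => rw [map_add, bmC.ls_add, hs, ht, map_add, map_add, map_add]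
  rw [hchar.linn_tmul_tmul_one hσv, hchar.rinn_tmul_one_tmul_one hσv,
    hchar.rs_tmul_tmul_one hσv, hls,
    ← dp.dH.coassoc, ← LinearMap.rTensor_def, ← LinearMap.rTensor_comp_apply]
  congr 2
  ext k
  simp [hlam.rinnAntipode_comul]

theorem closure_rs_tmul_one_eq_top (hchar : TwCrossedBimodChar dp bm ρ u σ v lam caA caB bmC)
    (hσv : IsTwistedCoaction Δ0 dp.dH0.counit.toLinearMap σ v) :
    AddSubmonoid.closure (Set.image2 bmC.rs (Set.range (· ⊗ₜ[ℂ] (1 : H))) Set.univ) = ⊤ := by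
  refine top_le_iff.mp (closure_tmul_eq_top.ge.trans (AddSubmonoid.closure_le.mpr ?_))
  rintro _ ⟨x, m, rfl⟩
  exact AddSubmonoid.subset_closure
    ⟨x ⊗ₜ 1, ⟨x, rfl⟩, 1 ⊗ₜ m, trivial, by rw [hchar.rs_tmul_one_tmul hσv, bm.rs_one]⟩

theorem one_mem_span_linn (hchar : TwCrossedBimodChar dp bm ρ u σ v lam caA caB bmC)
    (hσv : IsTwistedCoaction Δ0 dp.dH0.counit.toLinearMap σ v)
    (hlam : IsWeakCoactionBimod dp.dH0.counit.toLinearMap bm ρ σ lam)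
    (hfull : Submodule.span ℂ (Set.range fun p : X × X => bm.linn p.1 p.2) = ⊤) :
    caA.one ∈
      Submodule.span ℂ (Set.range fun p : (X ⊗[ℂ] H) × (X ⊗[ℂ] H) => bmC.linn p.1 p.2) := by
  rw [caA.one_def]
  exact map_mem_span_range_of_span_eq_top hfull (trivialCoaction H A)
    (fun p => (p.1 ⊗ₜ 1, p.2 ⊗ₜ 1)) (fun p => hchar.linn_tmul_one_tmul_one hσv hlam p.1 p.2) 1

theorem one_mem_span_rinn [StarModule ℂ B]
    (hchar : TwCrossedBimodChar dp bm ρ u σ v lam caA caB bmC)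
    (hσv : IsTwistedCoaction Δ0 dp.dH0.counit.toLinearMap σ v)
    (hfull : Submodule.span ℂ (Set.range fun p : X × X => bm.rinn p.1 p.2) = ⊤) :
    caB.one ∈
      Submodule.span ℂ (Set.range fun p : (X ⊗[ℂ] H) × (X ⊗[ℂ] H) => bmC.rinn p.1 p.2) := by
  rw [caB.one_def]
  exact map_mem_span_range_of_span_eq_top hfull (trivialCoaction H B)
    (fun p => (p.1 ⊗ₜ 1, p.2 ⊗ₜ 1)) (fun p => hchar.rinn_tmul_one_tmul_one hσv p.1 p.2) 1

end TwCrossedBimodChar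

theorem crossed_product_bimodule_equivalence_general
    {H H0 : Type u} [CStarAlgebra H] [FiniteDimensional ℂ H]
    [CStarAlgebra H0] [FiniteDimensional ℂ H0]
    {A B X : Type u} [CStarAlgebra A] [CStarAlgebra B]
    [AddCommGroup X] [Module ℂ X]
    (dp : HopfPairData H H0)
    (ρ : A →ₗ[ℂ] A ⊗[ℂ] H0) (u : (A ⊗[ℂ] H0) ⊗[ℂ] H0)
    (σ : B →ₗ[ℂ] B ⊗[ℂ] H0) (v : (B ⊗[ℂ] H0) ⊗[ℂ] H0)
    (hσv : IsTwistedCoaction dp.dH0.comul.toLinearMap dp.dH0.counit.toLinearMap σ v)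
    (bm : Bimod A B X) (heq : bm.IsEquivalence)
    (lam : X →ₗ[ℂ] X ⊗[ℂ] H0)
    (hcov : IsTwistedCoactionBimod dp.dH0.comul.toLinearMap dp.dH0.counit.toLinearMap
      bm ρ u σ v lam)
    (caA : TwCrossedAlg dp ρ u) (caB : TwCrossedAlg dp σ v)
    (bmC : BimodOver caA.toRawCStarAlg caB.toRawCStarAlg (X ⊗[ℂ] H))
    (hchar : TwCrossedBimodChar dp bm ρ u σ v lam caA caB bmC) :
    bmC.IsEquivalence ∧
    (∀ ξ η ζ : X ⊗[ℂ] H, bmC.ls (bmC.linn ξ η) ζ = bmC.rs ξ (bmC.rinn η ζ)) := by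
  obtain ⟨hassoc, hfullL, hfullR⟩ := heq
  have hP : ∀ ξ η ζ : X ⊗[ℂ] H, bmC.ls (bmC.linn ξ η) ζ = bmC.rs ξ (bmC.rinn η ζ) :=
    bmC.assoc_of_closure closure_tmul_eq_top (hchar.closure_rs_tmul_one_eq_top hσv) <| by
      rintro _ ⟨x, h, rfl⟩ _ ⟨y, rfl⟩ _ ⟨z, rfl⟩
      exact hchar.assoc_tmul_tmul_one_tmul_one hσv hcov.toIsWeakCoactionBimod hassoc x y z h
  refine ⟨⟨hP, ?_, ?_⟩, hP⟩
  · exact bmC.span_linn_eq_top (hchar.one_mem_span_linn hσv hcov.toIsWeakCoactionBimod hfullL)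
  · exact bmC.span_rinn_eq_top (hchar.one_mem_span_rinn hσv hfullR)

/-- Let `(A, B, X, ρ, u, σ, v, λ, H0)` be a twisted covariant system in
which `X` is an `A`–`B` equivalence bimodule.  Then the crossed product `X ⋊_λ H` is an
`(A ⋊_{ρ,u} H)`–`(B ⋊_{σ,v} H)` equivalence bimodule; in particular the associativity
condition `_{A⋊H}⟨ξ, η⟩ ζ = ξ ⟨η, ζ⟩_{B⋊H}` holds. -/
theorem crossed_product_bimodule_equivalence
    {H H0 : Type u} [CStarAlgebra H] [StarModule ℂ H] [FiniteDimensional ℂ H]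
    [CStarAlgebra H0] [StarModule ℂ H0] [FiniteDimensional ℂ H0]
    {A B X : Type u} [CStarAlgebra A] [StarModule ℂ A] [CStarAlgebra B] [StarModule ℂ B]
    [AddCommGroup X] [Module ℂ X]
    (dp : HopfPairData H H0)
    (ρ : A →ₗ[ℂ] A ⊗[ℂ] H0) (u : (A ⊗[ℂ] H0) ⊗[ℂ] H0)
    (σ : B →ₗ[ℂ] B ⊗[ℂ] H0) (v : (B ⊗[ℂ] H0) ⊗[ℂ] H0)
    (hρu : IsTwistedCoaction dp.dH0.comul.toLinearMap dp.dH0.counit.toLinearMap ρ u)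
    (hσv : IsTwistedCoaction dp.dH0.comul.toLinearMap dp.dH0.counit.toLinearMap σ v)
    (bm : Bimod A B X) (heq : bm.IsEquivalence)
    (lam : X →ₗ[ℂ] X ⊗[ℂ] H0)
    (hcov : IsTwistedCoactionBimod dp.dH0.comul.toLinearMap dp.dH0.counit.toLinearMap
      bm ρ u σ v lam)
    (caA : TwCrossedAlg dp ρ u) (caB : TwCrossedAlg dp σ v)
    (bmC : BimodOver caA.toRawCStarAlg caB.toRawCStarAlg (X ⊗[ℂ] H))
    (hchar : TwCrossedBimodChar dp bm ρ u σ v lam caA caB bmC) :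
    bmC.IsEquivalence ∧
    (∀ ξ η ζ : X ⊗[ℂ] H, bmC.ls (bmC.linn ξ η) ζ = bmC.rs ξ (bmC.rinn η ζ)) :=
  crossed_product_bimodule_equivalence_general dp ρ u σ v hσv bm heq lam hcov caA caB bmC hchar

end SMEPaper
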